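/- arXiv:1502.06357 — 2 statements merged into one kernel-verified Lean document; each statement's English description precedes it below -/
import Mathlib

section
/- Let (M,τ) be a tracial W*-probability space with τ faithful, and let X_1,…,X_n ∈ M be self-adjoint. If there exist ξ_1,…,ξ_n ∈ L²(M,τ) satisfying the conjugate relations (τ⊗τ)((∂_j P)(X)) = τ(ξ_j P(X)) for all P ∈ ℂ⟨Z_1,…,Z_n⟩ and all j, then for every polynomial P with P(X_1,…,X_n) = 0 one has (∂_j P)(X_1,…,X_n) = 0 for all j = 1,…,n. -/
/-!
Multiplying `P` on both sides by polynomials `A`, `B` and using `P(X) = 0`, the Leibniz rule gives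
`(∂_j (A P B))(X) = (A(X) ⊗ 1) (∂_j P)(X) (1 ⊗ B(X))`, and the conjugate relation says that `τ ⊗ τ`
of this vanishes because `(A P B)(X) = 0`. Hence `(∂_j P)(X)`, which lies in `𝒜 ⊗ 𝒜` for the
algebra `𝒜` generated by the self-adjoint `X_i`, is killed by every functional
`x ⊗ y ↦ τ(a x) τ(y b)` with `a, b ∈ 𝒜`. As `𝒜` is star-closed and `τ` is faithful and tracial,
these functionals separate the points of each factor, and separating families on both factors
separate the points of the tensor product: on finite-dimensional subspaces they span the duals.
-/

open scoped TensorProduct InnerProductSpace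

/-- `D` is the `j`-th noncommutative derivative on `ℂ⟨Z_1,…,Z_n⟩`. -/
def IsNCDerivative (n : ℕ) (j : Fin n)
    (D : FreeAlgebra ℂ (Fin n) →ₗ[ℂ] FreeAlgebra ℂ (Fin n) ⊗[ℂ] FreeAlgebra ℂ (Fin n)) :
    Prop :=
  (∀ a b : FreeAlgebra ℂ (Fin n),
      D (a * b) = D a * (1 ⊗ₜ[ℂ] b) + (a ⊗ₜ[ℂ] 1) * D b) ∧
  (∀ i : Fin n,
      D (FreeAlgebra.ι ℂ i) = if i = j then (1 ⊗ₜ[ℂ] 1) else 0)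

variable {H : Type*} [NormedAddCommGroup H] [InnerProductSpace ℂ H] [CompleteSpace H]

/-- `τ ⊗ τ` on the (algebraic) tensor square of `B(H)`. -/
noncomputable def tensorTrace (τ : (H →L[ℂ] H) →ₗ[ℂ] ℂ) :
    (H →L[ℂ] H) ⊗[ℂ] (H →L[ℂ] H) →ₗ[ℂ] ℂ :=
  (TensorProduct.lid ℂ ℂ).toLinearMap.comp (TensorProduct.map τ τ)

open Module TensorProduct

theorem Module.span_range_eq_top_of_separating {K V ι : Type*} [Field K] [AddCommGroup V]
    [Module K V] [FiniteDimensional K V] (φ : ι → Dual K V)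
    (hφ : ∀ x, (∀ i, φ i x = 0) → x = 0) :
    Submodule.span K (Set.range φ) = ⊤ := by
  have hco : (Submodule.span K (Set.range φ)).dualCoannihilator = ⊥ := by
    refine (Submodule.eq_bot_iff _).2 fun x hx => hφ x fun i => ?_
    exact (Submodule.mem_dualCoannihilator x).1 hx _ (Submodule.subset_span ⟨i, rfl⟩)
  rw [← Subspace.dualCoannihilator_dualAnnihilator_eq (W := Submodule.span K (Set.range φ)), hco,
    Submodule.dualAnnihilator_bot]

theorem TensorProduct.eq_zero_of_dualDistrib_eq_zero {K E F ι κ : Type*} [Field K]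
    [AddCommGroup E] [Module K E] [AddCommGroup F] [Module K F]
    (φ : ι → Dual K E) (ψ : κ → Dual K F)
    (hφ : ∀ x, (∀ i, φ i x = 0) → x = 0) (hψ : ∀ y, (∀ k, ψ k y = 0) → y = 0)
    (u : E ⊗[K] F) (hu : ∀ i k, dualDistrib K E F (φ i ⊗ₜ ψ k) u = 0) : u = 0 := by
  obtain ⟨E₀, F₀, _, _, hu₀⟩ := exists_finite_submodule_of_setFinite {u} (Set.finite_singleton u)
  obtain ⟨u₀, rfl⟩ := hu₀ (Set.mem_singleton u)
  set φ₀ : ι → Dual K E₀ := fun i => φ i ∘ₗ E₀.subtype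
  set ψ₀ : κ → Dual K F₀ := fun k => ψ k ∘ₗ F₀.subtype
  have hspan : Submodule.map₂ (mk K _ _) (Submodule.span K (Set.range φ₀))
      (Submodule.span K (Set.range ψ₀)) = ⊤ := by
    rw [span_range_eq_top_of_separating φ₀ fun x hx => Subtype.ext (hφ x hx),
      span_range_eq_top_of_separating ψ₀ fun y hy => Subtype.ext (hψ y hy),
      map₂_mk_top_top_eq_top]
  suffices ∀ t, dualDistrib K E₀ F₀ t u₀ = 0 by
    rw [(forall_dual_apply_eq_zero_iff K u₀).1 fun χ => ?_, map_zero]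
    obtain ⟨t, rfl⟩ := (dualDistribEquiv K E₀ F₀).surjective χ
    exact this t
  intro t
  have ht : t ∈ Submodule.map₂ (mk K _ _) (Submodule.span K (Set.range φ₀))
      (Submodule.span K (Set.range ψ₀)) := hspan ▸ Submodule.mem_top
  rw [Submodule.map₂_span_span] at ht
  induction ht using Submodule.span_induction with
  | mem t ht =>
    obtain ⟨_, ⟨i, rfl⟩, _, ⟨k, rfl⟩, rfl⟩ := ht
    have hres : dualDistrib K E₀ F₀ (φ₀ i ⊗ₜ ψ₀ k) =
        dualDistrib K E F (φ i ⊗ₜ ψ k) ∘ₗ mapIncl E₀ F₀ :=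
      ext' fun x y => by simp [φ₀, ψ₀]
    simpa [hres] using hu i k
  | zero => simp
  | add t t' _ _ h h' => simp [h, h']
  | smul c t _ h => simp [h]

theorem IsNCDerivative.map_apply_mul_mul {n : ℕ} {j : Fin n}
    {D : FreeAlgebra ℂ (Fin n) →ₗ[ℂ] FreeAlgebra ℂ (Fin n) ⊗[ℂ] FreeAlgebra ℂ (Fin n)}
    (hD : IsNCDerivative n j D) {B : Type*} [Ring B] [Algebra ℂ B]
    (f : FreeAlgebra ℂ (Fin n) →ₐ[ℂ] B) {P : FreeAlgebra ℂ (Fin n)} (hP : f P = 0)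
    (A A' : FreeAlgebra ℂ (Fin n)) :
    Algebra.TensorProduct.map f f (D (A * P * A')) =
      (f A ⊗ₜ 1) * Algebra.TensorProduct.map f f (D P) * (1 ⊗ₜ f A') := by
  simp [hD.1, hP, mul_add, mul_assoc]

section TraceForm

variable {K A : Type*} [Field K] [Ring A] [Algebra K A] (τ : A →ₗ[K] K) (𝒜 : Subalgebra K A)

theorem Subalgebra.lid_map_tmul_mul_map_val_mul_tmul (a b : 𝒜) (w : 𝒜 ⊗[K] 𝒜) :
    TensorProduct.lid K K (TensorProduct.map τ τ
        (((a : A) ⊗ₜ 1) * Algebra.TensorProduct.map 𝒜.val 𝒜.val w * (1 ⊗ₜ (b : A)))) =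
      dualDistrib K 𝒜 𝒜 ((τ ∘ₗ 𝒜.val.toLinearMap ∘ₗ LinearMap.mulLeft K a) ⊗ₜ
        (τ ∘ₗ 𝒜.val.toLinearMap ∘ₗ LinearMap.mulRight K b)) w := by
  induction w using TensorProduct.induction_on with
  | zero => simp
  | tmul x y => simp
  | add x y hx hy => simp [mul_add, add_mul, hx, hy]

theorem Subalgebra.map_val_eq_zero_of_forall_lid_map_eq_zero [Star A]
    (hstar : ∀ x ∈ 𝒜, star x ∈ 𝒜) (htr : ∀ a ∈ 𝒜, ∀ b ∈ 𝒜, τ (a * b) = τ (b * a))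
    (hfaith : ∀ a ∈ 𝒜, τ (star a * a) = 0 → a = 0) (w : 𝒜 ⊗[K] 𝒜)
    (hw : ∀ a b : 𝒜, TensorProduct.lid K K (TensorProduct.map τ τ (((a : A) ⊗ₜ 1) *
      Algebra.TensorProduct.map 𝒜.val 𝒜.val w * (1 ⊗ₜ (b : A)))) = 0) :
    Algebra.TensorProduct.map 𝒜.val 𝒜.val w = 0 := by
  suffices w = 0 by rw [this, map_zero]
  refine eq_zero_of_dualDistrib_eq_zero _ _ (fun x hx => ?_) (fun x hx => ?_) w
    fun a b => (𝒜.lid_map_tmul_mul_map_val_mul_tmul τ a b w).symm.trans (hw a b)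
  · refine Subtype.ext (hfaith x x.2 ?_)
    simpa using hx ⟨_, hstar x x.2⟩
  · refine Subtype.ext (hfaith x x.2 ?_)
    simpa [htr _ (hstar x x.2) x x.2] using hx ⟨_, hstar x x.2⟩

end TraceForm

theorem FreeAlgebra.star_mem_range_lift {A ι : Type*} [Ring A] [StarRing A] [Algebra ℂ A]
    [StarModule ℂ A] {X : ι → A} (hX : ∀ i, star (X i) = X i) {x : A}
    (hx : x ∈ (FreeAlgebra.lift ℂ X).range) : star x ∈ (FreeAlgebra.lift ℂ X).range := by
  have hXs : star (Set.range X) = Set.range X := by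
    ext y
    simp only [Set.mem_star, Set.mem_range]
    constructor <;> rintro ⟨i, hi⟩ <;> exact ⟨i, by simpa [hX] using congrArg star hi⟩
  rw [← Algebra.adjoin_range_eq_range_freeAlgebra_lift] at hx ⊢
  rwa [← Subalgebra.mem_star_iff, Subalgebra.star_adjoin_comm, hXs]

theorem stmt4_general (n : ℕ) (M : VonNeumannAlgebra H)
    (τ : (H →L[ℂ] H) →ₗ[ℂ] ℂ)
    (htr : ∀ a ∈ M, ∀ b ∈ M, τ (a * b) = τ (b * a))
    (hfaith : ∀ a ∈ M, τ (star a * a) = 0 → a = 0)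
    (X : Fin n → (H →L[ℂ] H)) (hXM : ∀ i, X i ∈ M) (hXsa : ∀ i, star (X i) = X i)
    (D : ∀ _ : Fin n,
      FreeAlgebra ℂ (Fin n) →ₗ[ℂ] FreeAlgebra ℂ (Fin n) ⊗[ℂ] FreeAlgebra ℂ (Fin n))
    (hD : ∀ j, IsNCDerivative n j (D j))
    -- the GNS-type representation of `L²(M,τ)` and the conjugate variables `ξ_j`
    {L : Type*} [NormedAddCommGroup L] [InnerProductSpace ℂ L]
    (ι : (H →L[ℂ] H) →ₗ[ℂ] L)
    (ξ : Fin n → L)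
    (hrel : ∀ (j : Fin n) (P : FreeAlgebra ℂ (Fin n)),
      tensorTrace τ
          ((Algebra.TensorProduct.map (FreeAlgebra.lift ℂ X) (FreeAlgebra.lift ℂ X))
            (D j P)) =
        ⟪ι (star ((FreeAlgebra.lift ℂ X) P)), ξ j⟫_ℂ) :
    ∀ P : FreeAlgebra ℂ (Fin n), (FreeAlgebra.lift ℂ X) P = 0 →
      ∀ j : Fin n,
        (Algebra.TensorProduct.map (FreeAlgebra.lift ℂ X) (FreeAlgebra.lift ℂ X))
          (D j P) = 0 := by
  intro P hP j
  set f := FreeAlgebra.lift ℂ X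
  have hrange_M : ∀ x ∈ f.range, x ∈ M := by
    rw [← Algebra.adjoin_range_eq_range_freeAlgebra_lift]
    exact fun x hx => Algebra.adjoin_le (S := M.toSubalgebra) (Set.range_subset_iff.2 hXM) hx
  rw [← f.val_comp_rangeRestrict, Algebra.TensorProduct.map_comp, AlgHom.comp_apply]
  refine f.range.map_val_eq_zero_of_forall_lid_map_eq_zero τ
    (fun x => FreeAlgebra.star_mem_range_lift hXsa)
    (fun a ha b hb => htr a (hrange_M a ha) b (hrange_M b hb))
    (fun a ha => hfaith a (hrange_M a ha)) _ ?_
  rintro ⟨_, A, rfl⟩ ⟨_, B, rfl⟩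
  rw [← AlgHom.comp_apply, ← Algebra.TensorProduct.map_comp, f.val_comp_rangeRestrict]
  have hsandwich := hrel j (A * P * B)
  rw [(hD j).map_apply_mul_mul f hP, map_mul f, map_mul f, hP] at hsandwich
  simpa [tensorTrace] using hsandwich

/-- in a tracial `W*`-probability space `(M, τ)` with `τ` faithful
(and normal, encoded as a σ-weakly convergent sum of vector states), if
`ξ_1,…,ξ_n` in `L²(M,τ)` (presented through the GNS-type space `L` with
embedding `ι` satisfying `⟪ι a, ι b⟫ = τ(a* b)`) satisfy the conjugate relations
`(τ⊗τ)((∂_j P)(X)) = τ(ξ_j P(X)) = ⟪ι((P(X))*), ξ_j⟫` for all polynomials `P`,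
then `P(X) = 0` implies `(∂_j P)(X) = 0` for all `j`. -/
theorem stmt4 (n : ℕ) (M : VonNeumannAlgebra H)
    (τ : (H →L[ℂ] H) →ₗ[ℂ] ℂ)
    (hone : τ 1 = 1)
    (htr : ∀ a ∈ M, ∀ b ∈ M, τ (a * b) = τ (b * a))
    (hpos : ∀ a ∈ M, 0 ≤ (τ (star a * a)).re ∧ (τ (star a * a)).im = 0)
    (hfaith : ∀ a ∈ M, τ (star a * a) = 0 → a = 0)
    (hnormal : ∃ e : ℕ → H, ∀ a ∈ M, τ a = ∑' i, ⟪e i, a (e i)⟫_ℂ)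
    (X : Fin n → (H →L[ℂ] H)) (hXM : ∀ i, X i ∈ M) (hXsa : ∀ i, star (X i) = X i)
    (D : ∀ _ : Fin n,
      FreeAlgebra ℂ (Fin n) →ₗ[ℂ] FreeAlgebra ℂ (Fin n) ⊗[ℂ] FreeAlgebra ℂ (Fin n))
    (hD : ∀ j, IsNCDerivative n j (D j))
    -- the GNS-type representation of `L²(M,τ)` and the conjugate variables `ξ_j`
    {L : Type*} [NormedAddCommGroup L] [InnerProductSpace ℂ L] [CompleteSpace L]
    (ι : (H →L[ℂ] H) →ₗ[ℂ] L)
    (hι : ∀ a ∈ M, ∀ b ∈ M, ⟪ι a, ι b⟫_ℂ = τ (star a * b))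
    (ξ : Fin n → L)
    (hrel : ∀ (j : Fin n) (P : FreeAlgebra ℂ (Fin n)),
      tensorTrace τ
          ((Algebra.TensorProduct.map (FreeAlgebra.lift ℂ X) (FreeAlgebra.lift ℂ X))
            (D j P)) =
        ⟪ι (star ((FreeAlgebra.lift ℂ X) P)), ξ j⟫_ℂ) :
    ∀ P : FreeAlgebra ℂ (Fin n), (FreeAlgebra.lift ℂ X) P = 0 →
      ∀ j : Fin n,
        (Algebra.TensorProduct.map (FreeAlgebra.lift ℂ X) (FreeAlgebra.lift ℂ X))
          (D j P) = 0 :=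
  stmt4_general n M τ htr hfaith X hXM hXsa D hD ι ξ hrel
end

section
/- Let (M,τ) be a tracial W*-probability space and X_1,…,X_n ∈ M self-adjoint such that for every polynomial P, P(X) = 0 implies (∂_j P)(X) = 0 for all j. Then X_1,…,X_n satisfy no nontrivial algebraic relation: P(X_1,…,X_n) = 0 for P ∈ ℂ⟨Z_1,…,Z_n⟩ forces P = 0. -/
/-!
Let `Δ_j = ((τ ∘ ev_X) ⊗ id) ∘ ∂_j`. If `P(X) = 0` then `(Δ_j P)(X) = 0` by hypothesis, and `Δ_j`
lowers the degree: when `deg P ≤ d + 1` and `u` is a word of length `d`, the coefficient of `u` in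
`Δ_j P` is `τ(1)` times the coefficient of `Z_j u` in `P`, because `Z_j u` is the only word of
length `≤ d + 1` with a right factor `u` following a letter `Z_j`. By induction on the degree
`Δ_j P = 0`, so all top-degree coefficients of `P` vanish; finally a constant `c` vanishing at
`X` satisfies `c = τ(c · 1) = 0`.
-/

open scoped TensorProduct InnerProductSpace

namespace TensorProduct

section Module
variable {R M N : Type*} [CommSemiring R] [AddCommMonoid M] [Module R M] [AddCommMonoid N]
  [Module R N]

/-- For `φ = τ ∘ ev_X`, `contractLeftWith φ ∘ₗ ∂_j` is the map `Δ_j` of the paper. -/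
def contractLeftWith (φ : M →ₗ[R] R) : M ⊗[R] N →ₗ[R] N :=
  (TensorProduct.lid R N).toLinearMap ∘ₗ φ.rTensor N

@[simp]
theorem contractLeftWith_tmul (φ : M →ₗ[R] R) (x : M) (y : N) :
    contractLeftWith φ (x ⊗ₜ[R] y) = φ x • y := by
  simp [contractLeftWith]

end Module

variable {R A B : Type*} [CommSemiring R] [Semiring A] [Algebra R A] [Semiring B] [Algebra R B]

theorem contractLeftWith_tmul_one_mul (φ : A →ₗ[R] R) (a : A) (t : A ⊗[R] A) :
    contractLeftWith φ ((a ⊗ₜ[R] 1) * t) = contractLeftWith (φ ∘ₗ LinearMap.mulLeft R a) t := by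
  induction t using TensorProduct.induction_on with
  | zero => simp
  | tmul x y => simp [Algebra.TensorProduct.tmul_mul_tmul]
  | add x y hx hy => rw [mul_add, map_add, map_add, hx, hy]

theorem map_contractLeftWith_comp (f : A →ₐ[R] B) (τ : B →ₗ[R] R) (t : A ⊗[R] A) :
    f (contractLeftWith (τ ∘ₗ f.toLinearMap) t) =
      contractLeftWith τ (Algebra.TensorProduct.map f f t) := by
  induction t using TensorProduct.induction_on with
  | zero => simp
  | tmul x y => simp
  | add x y hx hy => rw [map_add, map_add, map_add, map_add, hx, hy]

end TensorProduct

namespace FreeAlgebra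
open TensorProduct

section CommSemiring
variable {R X : Type*} [CommSemiring R]

theorem basisFreeMonoid_apply (w : FreeMonoid X) :
    basisFreeMonoid R X w = equivMonoidAlgebraFreeMonoid.symm (.single w 1) := by
  simp [basisFreeMonoid]

theorem basisFreeMonoid_one : basisFreeMonoid R X 1 = 1 := by
  rw [basisFreeMonoid_apply, ← MonoidAlgebra.one_def, map_one]

theorem basisFreeMonoid_mul (v w : FreeMonoid X) :
    basisFreeMonoid R X (v * w) = basisFreeMonoid R X v * basisFreeMonoid R X w := by
  simp only [basisFreeMonoid_apply, ← map_mul, MonoidAlgebra.single_mul_single, mul_one]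

theorem basisFreeMonoid_of (i : X) : basisFreeMonoid R X (.of i) = ι R i := by
  rw [basisFreeMonoid_apply, AlgEquiv.symm_apply_eq]
  simp [equivMonoidAlgebraFreeMonoid]

def degLE (d : ℕ) : Submodule R (FreeAlgebra R X) :=
  Submodule.span R (basisFreeMonoid R X '' {w | w.length ≤ d})

theorem mem_degLE_iff {d : ℕ} {P : FreeAlgebra R X} :
    P ∈ degLE d ↔ ∀ w, d < w.length → (basisFreeMonoid R X).repr P w = 0 := by
  rw [degLE, Module.Basis.mem_span_image]
  refine forall_congr' fun w => ?_
  simp only [Finset.mem_coe, Finsupp.mem_support_iff, Set.mem_ofPred_eq]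
  rw [← not_le, not_imp_comm]

theorem basisFreeMonoid_mem_degLE {d : ℕ} {w : FreeMonoid X} (h : w.length ≤ d) :
    basisFreeMonoid R X w ∈ degLE d :=
  Submodule.subset_span ⟨w, h, rfl⟩

theorem exists_mem_degLE (P : FreeAlgebra R X) : ∃ d, P ∈ degLE d := by
  refine ⟨(basisFreeMonoid R X).repr P |>.support.sup FreeMonoid.length, mem_degLE_iff.2 ?_⟩
  intro w hw
  by_contra hne
  exact hw.not_ge (Finset.le_sup (Finsupp.mem_support_iff.2 hne))

theorem eq_smul_one_of_mem_degLE_zero {P : FreeAlgebra R X} (h : P ∈ degLE 0) :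
    P = (basisFreeMonoid R X).repr P 1 • 1 := by
  apply (basisFreeMonoid R X).repr.injective
  ext w
  rw [map_smul, ← basisFreeMonoid_one, Module.Basis.repr_self]
  rcases eq_or_ne w 1 with rfl | hw
  · simp
  · rw [mem_degLE_iff.1 h w (Nat.pos_of_ne_zero (mt FreeMonoid.length_eq_zero.1 hw))]
    simp [Ne.symm hw]

theorem mem_degLE_of_repr_eq_zero {d : ℕ} {P : FreeAlgebra R X} (hP : P ∈ degLE (d + 1))
    (h : ∀ w : FreeMonoid X, w.length = d + 1 → (basisFreeMonoid R X).repr P w = 0) :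
    P ∈ degLE d :=
  mem_degLE_iff.2 fun w hw => (Nat.succ_le_of_lt hw).eq_or_lt.elim (h w ·.symm)
    (mem_degLE_iff.1 hP w)

end CommSemiring

variable {R X : Type*} [CommRing R]

section Derivation
variable {D : FreeAlgebra R X →ₗ[R] FreeAlgebra R X ⊗[R] FreeAlgebra R X}

theorem map_one_of_leibniz
    (hmul : ∀ a b, D (a * b) = D a * (1 ⊗ₜ b) + (a ⊗ₜ 1) * D b) : D 1 = 0 := by
  simpa [← Algebra.TensorProduct.one_def] using hmul 1 1

variable [DecidableEq X] {j : X}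

theorem contractLeftWith_ι_mul
    (hmul : ∀ a b, D (a * b) = D a * (1 ⊗ₜ b) + (a ⊗ₜ 1) * D b)
    (hι : ∀ i, D (ι R i) = if i = j then 1 ⊗ₜ 1 else 0)
    (φ : FreeAlgebra R X →ₗ[R] R) (i : X) (P : FreeAlgebra R X) :
    contractLeftWith φ (D (ι R i * P)) = (if i = j then φ 1 • P else 0) +
      contractLeftWith (φ ∘ₗ LinearMap.mulLeft R (ι R i)) (D P) := by
  rw [hmul, hι, map_add, contractLeftWith_tmul_one_mul]
  split_ifs <;> simp [Algebra.TensorProduct.tmul_mul_tmul]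

theorem contractLeftWith_basisFreeMonoid_mem_degLE
    (hmul : ∀ a b, D (a * b) = D a * (1 ⊗ₜ b) + (a ⊗ₜ 1) * D b)
    (hι : ∀ i, D (ι R i) = if i = j then 1 ⊗ₜ 1 else 0)
    {d : ℕ} (w : FreeMonoid X) (hw : w.length ≤ d + 1) (φ : FreeAlgebra R X →ₗ[R] R) :
    contractLeftWith φ (D (basisFreeMonoid R X w)) ∈ degLE d := by
  induction w using FreeMonoid.inductionOn' generalizing φ with
  | one => simp [basisFreeMonoid_one, map_one_of_leibniz hmul]
  | of_mul i w ih =>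
    rw [FreeMonoid.length_mul, FreeMonoid.length_of] at hw
    rw [basisFreeMonoid_mul, basisFreeMonoid_of, contractLeftWith_ι_mul hmul hι]
    refine add_mem ?_ (ih (by omega) _)
    split_ifs
    · exact Submodule.smul_mem _ _ (basisFreeMonoid_mem_degLE (by omega))
    · exact zero_mem _

theorem repr_contractLeftWith_basisFreeMonoid
    (hmul : ∀ a b, D (a * b) = D a * (1 ⊗ₜ b) + (a ⊗ₜ 1) * D b)
    (hι : ∀ i, D (ι R i) = if i = j then 1 ⊗ₜ 1 else 0)
    {u : FreeMonoid X} (w : FreeMonoid X) (hw : w.length ≤ u.length + 1)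
    (φ : FreeAlgebra R X →ₗ[R] R) :
    (basisFreeMonoid R X).repr (contractLeftWith φ (D (basisFreeMonoid R X w))) u =
      φ 1 * (basisFreeMonoid R X).repr (basisFreeMonoid R X w) (.of j * u) := by
  induction w using FreeMonoid.inductionOn' generalizing φ with
  | one =>
    have : FreeMonoid.of j * u ≠ 1 := fun h => by simpa using congrArg FreeMonoid.length h
    rw [Module.Basis.repr_self, Finsupp.single_eq_of_ne this, basisFreeMonoid_one,
      map_one_of_leibniz hmul]
    simp
  | of_mul i w ih =>
    rw [FreeMonoid.length_mul, FreeMonoid.length_of] at hw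
    have hne : FreeMonoid.of j * u ≠ w := fun h => by
      have := congrArg FreeMonoid.length h
      simp only [FreeMonoid.length_mul, FreeMonoid.length_of] at this
      omega
    rw [Module.Basis.repr_self, basisFreeMonoid_mul, basisFreeMonoid_of,
      contractLeftWith_ι_mul hmul hι, map_add, Finsupp.add_apply, ih (by omega),
      Module.Basis.repr_self, Finsupp.single_eq_of_ne hne, mul_zero, add_zero]
    split_ifs with hij
    · subst hij
      rw [Finsupp.single_apply_left (mul_right_injective (FreeMonoid.of i)), map_smul,
        Module.Basis.repr_self, ← smul_eq_mul, ← Finsupp.smul_apply, Finsupp.smul_single_one]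
    · have : FreeMonoid.of j * u ≠ .of i * w := fun h =>
        hij (by simpa using (congrArg FreeMonoid.toList h).symm : i = j ∧ w = u).1
      simp [Finsupp.single_eq_of_ne this]

theorem contractLeftWith_mem_degLE
    (hmul : ∀ a b, D (a * b) = D a * (1 ⊗ₜ b) + (a ⊗ₜ 1) * D b)
    (hι : ∀ i, D (ι R i) = if i = j then 1 ⊗ₜ 1 else 0)
    (φ : FreeAlgebra R X →ₗ[R] R) {d : ℕ} {P : FreeAlgebra R X} (hP : P ∈ degLE (d + 1)) :
    contractLeftWith φ (D P) ∈ degLE d := by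
  induction hP using Submodule.span_induction with
  | mem _ hx =>
    obtain ⟨w, hw, rfl⟩ := hx
    exact contractLeftWith_basisFreeMonoid_mem_degLE hmul hι w hw φ
  | zero => simp
  | add _ _ _ _ hx hy => simpa using add_mem hx hy
  | smul c _ _ hx => simpa using Submodule.smul_mem _ c hx

theorem repr_contractLeftWith
    (hmul : ∀ a b, D (a * b) = D a * (1 ⊗ₜ b) + (a ⊗ₜ 1) * D b)
    (hι : ∀ i, D (ι R i) = if i = j then 1 ⊗ₜ 1 else 0)
    (φ : FreeAlgebra R X →ₗ[R] R) {u : FreeMonoid X} {P : FreeAlgebra R X}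
    (hP : P ∈ degLE (u.length + 1)) :
    (basisFreeMonoid R X).repr (contractLeftWith φ (D P)) u =
      φ 1 * (basisFreeMonoid R X).repr P (.of j * u) := by
  induction hP using Submodule.span_induction with
  | mem _ hx =>
    obtain ⟨w, hw, rfl⟩ := hx
    exact repr_contractLeftWith_basisFreeMonoid hmul hι w hw φ
  | zero => simp
  | add _ _ _ _ hx hy => simp [hx, hy, mul_add]
  | smul c _ _ hx => simp [hx, mul_left_comm]

end Derivation

theorem injective_of_map_derivative_eq_zero [DecidableEq X] {B : Type*} [Ring B] [Algebra R B]
    (f : FreeAlgebra R X →ₐ[R] B) (τ : B →ₗ[R] R) (hτ : τ 1 = 1)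
    (D : X → FreeAlgebra R X →ₗ[R] FreeAlgebra R X ⊗[R] FreeAlgebra R X)
    (hmul : ∀ j a b, D j (a * b) = D j a * (1 ⊗ₜ b) + (a ⊗ₜ 1) * D j b)
    (hι : ∀ j i, D j (ι R i) = if i = j then 1 ⊗ₜ 1 else 0)
    (hker : ∀ P, f P = 0 → ∀ j, Algebra.TensorProduct.map f f (D j P) = 0) :
    Function.Injective f := by
  refine (injective_iff_map_eq_zero f).2 fun P hP => ?_
  obtain ⟨d, hd⟩ := exists_mem_degLE P
  induction d generalizing P with
  | zero =>
    set c := (basisFreeMonoid R X).repr P 1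
    have hPc : P = c • 1 := eq_smul_one_of_mem_degLE_zero hd
    have hc : c = 0 := by
      simpa [hPc, hτ] using congrArg τ hP
    rw [hPc, hc, zero_smul]
  | succ d ih =>
    refine ih P hP (mem_degLE_of_repr_eq_zero hd fun w hw => ?_)
    cases w with
    | one => simp at hw
    | of_mul j u =>
      simp only [FreeMonoid.length_mul, FreeMonoid.length_of] at hw
      have hΔ : contractLeftWith (τ ∘ₗ f.toLinearMap) (D j P) = 0 :=
        ih _ (by rw [map_contractLeftWith_comp, hker P hP j, map_zero])
          (contractLeftWith_mem_degLE (hmul j) (hι j) _ hd)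
      have hcoeff := repr_contractLeftWith (hmul j) (hι j) (τ ∘ₗ f.toLinearMap) (u := u)
        (by rwa [show u.length + 1 = d + 1 by omega])
      simpa [hΔ, hτ] using hcoeff.symm

end FreeAlgebra

theorem stmt5_general {H : Type*} [NormedAddCommGroup H] [InnerProductSpace ℂ H]
    (n : ℕ)
    (τ : (H →L[ℂ] H) →ₗ[ℂ] ℂ)
    (hone : τ 1 = 1)
    (X : Fin n → (H →L[ℂ] H))
    (D : ∀ _ : Fin n,
      FreeAlgebra ℂ (Fin n) →ₗ[ℂ] FreeAlgebra ℂ (Fin n) ⊗[ℂ] FreeAlgebra ℂ (Fin n))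
    (hD : ∀ j, IsNCDerivative n j (D j))
    (hred : ∀ P : FreeAlgebra ℂ (Fin n), (FreeAlgebra.lift ℂ X) P = 0 →
      ∀ j : Fin n,
        (Algebra.TensorProduct.map (FreeAlgebra.lift ℂ X) (FreeAlgebra.lift ℂ X))
          (D j P) = 0) :
    ∀ P : FreeAlgebra ℂ (Fin n), (FreeAlgebra.lift ℂ X) P = 0 → P = 0 :=
  (injective_iff_map_eq_zero _).1 <| FreeAlgebra.injective_of_map_derivative_eq_zero
    (FreeAlgebra.lift ℂ X) τ hone D (fun j => (hD j).1) (fun j => (hD j).2) hred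

/-- let `(M,τ)` be a tracial `W*`-probability space and
`X_1,…,X_n ∈ M` self-adjoint such that for every polynomial `P`,
`P(X) = 0` implies `(∂_j P)(X) = 0` for all `j`.  Then `X_1,…,X_n` satisfy no
nontrivial algebraic relation: `P(X_1,…,X_n) = 0` forces `P = 0`. -/
theorem stmt5 {H : Type*} [NormedAddCommGroup H] [InnerProductSpace ℂ H] [CompleteSpace H]
    (n : ℕ) (M : VonNeumannAlgebra H)
    (τ : (H →L[ℂ] H) →ₗ[ℂ] ℂ)
    (hone : τ 1 = 1)
    (htr : ∀ a ∈ M, ∀ b ∈ M, τ (a * b) = τ (b * a))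
    (hpos : ∀ a ∈ M, 0 ≤ (τ (star a * a)).re ∧ (τ (star a * a)).im = 0)
    (hfaith : ∀ a ∈ M, τ (star a * a) = 0 → a = 0)
    (hnormal : ∃ e : ℕ → H, ∀ a ∈ M, τ a = ∑' i, ⟪e i, a (e i)⟫_ℂ)
    (X : Fin n → (H →L[ℂ] H)) (hXM : ∀ i, X i ∈ M) (hXsa : ∀ i, star (X i) = X i)
    (D : ∀ _ : Fin n,
      FreeAlgebra ℂ (Fin n) →ₗ[ℂ] FreeAlgebra ℂ (Fin n) ⊗[ℂ] FreeAlgebra ℂ (Fin n))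
    (hD : ∀ j, IsNCDerivative n j (D j))
    (hred : ∀ P : FreeAlgebra ℂ (Fin n), (FreeAlgebra.lift ℂ X) P = 0 →
      ∀ j : Fin n,
        (Algebra.TensorProduct.map (FreeAlgebra.lift ℂ X) (FreeAlgebra.lift ℂ X))
          (D j P) = 0) :
    ∀ P : FreeAlgebra ℂ (Fin n), (FreeAlgebra.lift ℂ X) P = 0 → P = 0 :=
  stmt5_general n τ hone X D hD hred
end
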